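/- With M^{-1} = min_{z ∈ l₁} u(z), the solution u of the Dirichlet problem in D₀ satisfies the self-similarity inequality u(γ_{n,k}(z)) ≥ M^{-n}·u(z) for all z ∈ D₀, all n ∈ ℕ and all k ∈ ℤ. -/

import Mathlib

/-
STATEMENT 9: With M⁻¹ = min_{z ∈ l₁} u(z), the solution u of the Dirichlet problem
in D₀ satisfies the self-similarity inequality u(γ_{n,k}(z)) ≥ M^{−n}·u(z) for all
z ∈ D₀, all n ∈ ℕ and all k ∈ ℤ.
-/
noncomputable section

open Set

/-- γ_{n,k}(z) = 2^{−n}(z + k). -/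
def gammaMap (n : ℕ) (k : ℤ) (z : ℂ) : ℂ := (2 : ℂ) ^ (-(n : ℤ)) * (z + (k : ℂ))

/-- The square S⁺_{0,0} = {z : |Re z| ≤ 3/10, |Im z − 1| ≤ 3/10}. -/
def Sp00 : Set ℂ := {z : ℂ | |z.re| ≤ 3 / 10 ∧ |z.im - 1| ≤ 3 / 10}

/-- S⁺_{n,k} = γ_{n,k}(S⁺_{0,0}). -/
def Sp (n : ℕ) (k : ℤ) : Set ℂ := gammaMap n k '' Sp00

/-- D₀ = {z : 0 < Im z < 4/3} \ ⋃_{n,k} S⁺_{n,k}. -/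
def D0 : Set ℂ := {z : ℂ | 0 < z.im ∧ z.im < 4 / 3} \ ⋃ (n : ℕ), ⋃ (k : ℤ), Sp n k

/-- The line l₀ = {z : Im z = 4/3}. -/
def l0 : Set ℂ := {z : ℂ | z.im = 4 / 3}

/-- The line l₁ = {z : Im z = 2/3}. -/
def l1 : Set ℂ := {z : ℂ | z.im = 2 / 3}

/-- A continuous function is harmonic on an open set iff it satisfies the mean
value property on every closed disk contained in the set; we take this as the
definition of harmonicity. -/
def IsHarmonicOn (u : ℂ → ℝ) (U : Set ℂ) : Prop :=
  ContinuousOn u U ∧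
  ∀ z ∈ U, ∀ ρ : ℝ, 0 < ρ → Metric.closedBall z ρ ⊆ U →
    u z = (1 / (2 * Real.pi)) *
      ∫ θ in (0:ℝ)..(2 * Real.pi), u (z + ρ * Complex.exp (θ * Complex.I))

/-- `u` solves the Dirichlet problem in D₀: it is bounded on the closure of D₀,
continuous there, harmonic in D₀, equal to 1 on l₀ and equal to 0 on ∂D₀ \ l₀. -/
def IsDirichletSol (u : ℂ → ℝ) : Prop :=
  (∃ C : ℝ, ∀ z ∈ closure D0, |u z| ≤ C) ∧
  ContinuousOn u (closure D0) ∧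
  IsHarmonicOn u D0 ∧
  (∀ z ∈ l0, u z = 1) ∧
  (∀ z ∈ frontier D0 \ l0, u z = 0)

open Metric Complex

def MVP (v : ℂ → ℝ) (U : Set ℂ) : Prop :=
  ∀ z ∈ U, ∀ ρ : ℝ, 0 < ρ → Metric.closedBall z ρ ⊆ U →
    v z = (1 / (2 * Real.pi)) *
      ∫ θ in (0:ℝ)..(2 * Real.pi), v (z + ρ * Complex.exp (θ * Complex.I))

lemma circle_cont (z : ℂ) (ρ : ℝ) :
    Continuous fun θ : ℝ => z + (ρ : ℂ) * Complex.exp (θ * Complex.I) :=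
  continuous_const.add (continuous_const.mul (Complex.continuous_exp.comp
    (Complex.continuous_ofReal.mul continuous_const)))

lemma circle_mem_closedBall {ρ : ℝ} (hρ : 0 ≤ ρ) (z : ℂ) (θ : ℝ) :
    z + (ρ : ℂ) * Complex.exp (θ * Complex.I) ∈ Metric.closedBall z ρ := by
  simp [Metric.mem_closedBall, dist_eq, norm_mul, Complex.norm_exp_ofReal_mul_I, Complex.norm_real,
    _root_.abs_of_nonneg hρ]

lemma circle_integrable {f : ℂ → ℝ} {S : Set ℂ} (hf : ContinuousOn f S) {z : ℂ} {ρ : ℝ}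
    (hρ : 0 ≤ ρ) (h : Metric.closedBall z ρ ⊆ S) :
    IntervalIntegrable (fun θ : ℝ => f (z + (ρ : ℂ) * Complex.exp (θ * Complex.I)))
      MeasureTheory.volume 0 (2 * Real.pi) := by
  apply ContinuousOn.intervalIntegrable
  apply hf.comp (circle_cont z ρ).continuousOn
  intro θ _
  exact h (circle_mem_closedBall hρ z θ)

/-- the mean value property for the real part of `cosh`. -/
def phi (z : ℂ) : ℝ := (Complex.cosh z).re

lemma phi_eq (z : ℂ) : phi z = Real.cosh z.re * Real.cos z.im := by
  have h : Complex.cosh z = Complex.cosh z.re * Complex.cos z.im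
      + Complex.sinh z.re * Complex.sin z.im * Complex.I := by
    conv_lhs => rw [← Complex.re_add_im z]
    rw [Complex.cosh_add, Complex.cosh_mul_I, Complex.sinh_mul_I]
    ring
  rw [phi, h]
  simp [Complex.add_re, Complex.mul_re, Complex.cosh_ofReal_re, Complex.cosh_ofReal_im,
    Complex.cos_ofReal_re, Complex.cos_ofReal_im, Complex.sinh_ofReal_im, Complex.sin_ofReal_im]

lemma phi_cont : Continuous phi := Complex.continuous_re.comp Complex.continuous_cosh

lemma phi_mvp (z : ℂ) (ρ : ℝ) (hρ : 0 < ρ) :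
    phi z = (1 / (2 * Real.pi)) *
      ∫ θ in (0:ℝ)..(2 * Real.pi), phi (z + ρ * Complex.exp (θ * Complex.I)) := by
  have hd : DiffContOnCl ℂ Complex.cosh (Metric.ball z ρ) :=
    Complex.differentiable_cosh.diffContOnCl
  have h := hd.circleIntegral_sub_inv_smul (w := z) (Metric.mem_ball_self hρ)
  rw [circleIntegral] at h
  have h2 : ∀ θ : ℝ, deriv (circleMap z ρ) θ • (circleMap z ρ θ - z)⁻¹ • Complex.cosh (circleMap z ρ θ)
      = Complex.I * Complex.cosh (circleMap z ρ θ) := by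
    intro θ
    rw [deriv_circleMap, circleMap_sub_center, smul_eq_mul, smul_eq_mul]
    have hne : circleMap 0 ρ θ ≠ 0 := by
      simp [circleMap, Complex.exp_ne_zero, ne_of_gt hρ]
    field_simp
  simp only [h2] at h
  rw [intervalIntegral.integral_const_mul] at h
  have hI : (∫ θ in (0:ℝ)..(2 * Real.pi), Complex.cosh (circleMap z ρ θ))
      = 2 * Real.pi * Complex.cosh z := by
    have hI' : Complex.I * (∫ θ in (0:ℝ)..(2 * Real.pi), Complex.cosh (circleMap z ρ θ))
        = Complex.I * (2 * Real.pi * Complex.cosh z) := by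
      rw [h]; rw [smul_eq_mul]; push_cast; ring
    exact mul_left_cancel₀ Complex.I_ne_zero hI'
  have hint : IntervalIntegrable (fun θ : ℝ => Complex.cosh (circleMap z ρ θ))
      MeasureTheory.volume 0 (2 * Real.pi) :=
    (Complex.continuous_cosh.comp (continuous_circleMap z ρ)).intervalIntegrable _ _
  have hre : (∫ θ in (0:ℝ)..(2 * Real.pi), Complex.cosh (circleMap z ρ θ)).re
      = ∫ θ in (0:ℝ)..(2 * Real.pi), (Complex.cosh (circleMap z ρ θ)).re := by
    exact (Complex.reCLM.intervalIntegral_comp_comm hint).symm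
  have : (∫ θ in (0:ℝ)..(2 * Real.pi), phi (circleMap z ρ θ)) = 2 * Real.pi * phi z := by
    unfold phi
    rw [← hre, hI]
    simp
  have hpi : (2 * Real.pi) ≠ 0 := by positivity
  rw [show (fun θ : ℝ => phi (z + ρ * Complex.exp (θ * Complex.I)))
      = fun θ : ℝ => phi (circleMap z ρ θ) from rfl] at *
  rw [this]
  field_simp

lemma mvp_combine {f g : ℂ → ℝ} (a b : ℝ) {z : ℂ} {ρ : ℝ}
    (hf : f z = (1 / (2 * Real.pi)) *
      ∫ θ in (0:ℝ)..(2 * Real.pi), f (z + ρ * Complex.exp (θ * Complex.I)))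
    (hg : g z = (1 / (2 * Real.pi)) *
      ∫ θ in (0:ℝ)..(2 * Real.pi), g (z + ρ * Complex.exp (θ * Complex.I)))
    (hfi : IntervalIntegrable (fun θ : ℝ => f (z + (ρ:ℂ) * Complex.exp (θ * Complex.I)))
      MeasureTheory.volume 0 (2 * Real.pi))
    (hgi : IntervalIntegrable (fun θ : ℝ => g (z + (ρ:ℂ) * Complex.exp (θ * Complex.I)))
      MeasureTheory.volume 0 (2 * Real.pi)) :
    a * f z + b * g z = (1 / (2 * Real.pi)) *
      ∫ θ in (0:ℝ)..(2 * Real.pi),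
        (a * f (z + ρ * Complex.exp (θ * Complex.I)) + b * g (z + ρ * Complex.exp (θ * Complex.I))) := by
  rw [intervalIntegral.integral_add (hfi.const_mul a) (hgi.const_mul b),
    intervalIntegral.integral_const_mul, intervalIntegral.integral_const_mul]
  rw [hf, hg]
  ring

/-- The maximum principle for MVP functions on a bounded open set. -/
lemma maxPrinciple {U : Set ℂ} (hU : IsOpen U) (hb : Bornology.IsBounded U)
    {v : ℂ → ℝ} (hvc : ContinuousOn v (closure U)) (hmvp : MVP v U)
    (hbd : ∀ z ∈ closure U \ U, v z ≤ 0) : ∀ z ∈ closure U, v z ≤ 0 := by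
  intro z hz
  by_contra hpos
  push_neg at hpos
  have hKc : IsCompact (closure U) := hb.isCompact_closure
  obtain ⟨z0, hz0K, hz0max⟩ := hKc.exists_isMaxOn ⟨z, hz⟩ hvc
  set m := v z0 with hm_def
  have hm : 0 < m := lt_of_lt_of_le hpos (hz0max hz)
  set A : Set ℂ := closure U ∩ v ⁻¹' {m} with hA_def
  have hAclosed : IsClosed A :=
    hvc.preimage_isClosed_of_isClosed isClosed_closure isClosed_singleton
  have hAU : A ⊆ U := by
    rintro w ⟨hw1, hw2⟩
    by_contra hwU
    have h0 := hbd w ⟨hw1, hwU⟩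
    simp only [mem_preimage, mem_singleton_iff] at hw2
    rw [hw2] at h0
    linarith
  have hAopen : IsOpen A := by
    rw [Metric.isOpen_iff]
    intro w hw
    obtain ⟨ε, hε, hball⟩ := Metric.isOpen_iff.1 hU w (hAU hw)
    refine ⟨ε / 2, by positivity, ?_⟩
    have hrU : Metric.closedBall w (ε / 2) ⊆ U :=
      (Metric.closedBall_subset_ball (by linarith)).trans hball
    intro y hy
    rcases eq_or_ne y w with rfl | hne
    · exact hw
    set ρ := dist y w with hρ_def
    have hρ0 : 0 < ρ := dist_pos.2 hne
    have hρr : ρ < ε / 2 := mem_ball.1 hy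
    have hcb : Metric.closedBall w ρ ⊆ U :=
      (Metric.closedBall_subset_closedBall hρr.le).trans hrU
    have hint := hmvp w (hAU hw) ρ hρ0 hcb
    have hyK : y ∈ closure U := subset_closure (hcb (mem_closedBall.mpr le_rfl))
    -- find θ0 ∈ [0, 2π] with w + ρ exp(θ0 I) = y
    have habs : ‖y - w‖ = ρ := by rw [hρ_def, Complex.dist_eq]
    have hmain : (ρ : ℂ) * Complex.exp ((Complex.arg (y - w) : ℝ) * Complex.I) = y - w := by
      rw [← habs]
      exact_mod_cast Complex.norm_mul_exp_arg_mul_I (y - w)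
    obtain ⟨θ0, hθ0mem, hθ0⟩ : ∃ θ0 ∈ Icc (0:ℝ) (2 * Real.pi),
        w + (ρ:ℂ) * Complex.exp ((θ0 : ℝ) * Complex.I) = y := by
      rcases le_or_gt 0 (Complex.arg (y - w)) with h1 | h1
      · refine ⟨Complex.arg (y - w), ⟨h1, by linarith [Complex.arg_le_pi (y - w),
          Real.pi_pos]⟩, by rw [hmain]; ring⟩
      · refine ⟨Complex.arg (y - w) + 2 * Real.pi,
          ⟨by linarith [Complex.neg_pi_lt_arg (y - w), Real.pi_pos],
           by linarith [Complex.arg_le_pi (y - w), Real.pi_pos]⟩, ?_⟩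
        have hexp : Complex.exp (((Complex.arg (y - w) + 2 * Real.pi : ℝ) : ℂ) * Complex.I)
            = Complex.exp ((Complex.arg (y - w) : ℝ) * Complex.I) := by
          push_cast
          rw [add_mul, Complex.exp_add]
          simp [Complex.exp_two_pi_mul_I]
        rw [hexp, hmain]; ring
    set g : ℝ → ℝ := fun θ => m - v (w + (ρ:ℂ) * Complex.exp ((θ:ℝ) * Complex.I)) with hg_def
    have hcirc_mem : ∀ θ : ℝ, w + (ρ:ℂ) * Complex.exp ((θ:ℝ) * Complex.I) ∈ closure U :=
      fun θ => subset_closure (hcb (circle_mem_closedBall hρ0.le w θ))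
    have hvcirc : ContinuousOn (fun θ : ℝ => v (w + (ρ:ℂ) * Complex.exp ((θ:ℝ) * Complex.I)))
        (Icc 0 (2 * Real.pi)) :=
      hvc.comp (circle_cont w ρ).continuousOn fun θ _ => hcirc_mem θ
    have hgc : ContinuousOn g (Icc 0 (2 * Real.pi)) := continuousOn_const.sub hvcirc
    have hg0 : ∀ θ ∈ Ioc (0:ℝ) (2 * Real.pi), 0 ≤ g θ :=
      fun θ _ => sub_nonneg.2 (hz0max (hcirc_mem θ))
    have hvint : IntervalIntegrable (fun θ : ℝ => v (w + (ρ:ℂ) * Complex.exp ((θ:ℝ) * Complex.I)))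
        MeasureTheory.volume 0 (2 * Real.pi) :=
      circle_integrable hvc hρ0.le (hcb.trans subset_closure)
    have hvw : v w = m := by
      have hw2 := hw.2
      simpa only [mem_preimage, mem_singleton_iff] using hw2
    have hIval : (∫ θ in (0:ℝ)..(2 * Real.pi),
        v (w + (ρ:ℂ) * Complex.exp ((θ:ℝ) * Complex.I))) = 2 * Real.pi * m := by
      rw [hvw] at hint
      have h2π : (0:ℝ) < 2 * Real.pi := Real.two_pi_pos
      field_simp at hint
      linarith
    have hgint : (∫ θ in (0:ℝ)..(2 * Real.pi), g θ) = 0 := by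
      rw [hg_def]
      rw [intervalIntegral.integral_sub intervalIntegrable_const hvint, hIval,
        intervalIntegral.integral_const]
      simp only [sub_zero, smul_eq_mul]
      ring
    have hvy : v y = m := by
      by_contra hvyne
      have hvy' : v y < m := lt_of_le_of_ne (hz0max hyK) hvyne
      have hposint : 0 < ∫ θ in (0:ℝ)..(2 * Real.pi), g θ := by
        apply intervalIntegral.integral_pos Real.two_pi_pos hgc hg0
        exact ⟨θ0, hθ0mem, by simp only [hg_def]; rw [hθ0]; linarith⟩
      linarith
    exact ⟨hyK, by simp [mem_preimage, hvy]⟩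
  have hAne : A.Nonempty := ⟨z0, hz0K, by simp [mem_preimage, hm_def]⟩
  have hAuniv : A = univ :=
    (isClopen_iff.mp ⟨hAclosed, hAopen⟩).resolve_left (Set.nonempty_iff_ne_empty.mp hAne)
  have : Bornology.IsBounded (univ : Set ℂ) := hb.subset (hAuniv ▸ hAU)
  exact NormedSpace.unbounded_univ ℝ ℂ this

lemma two_zpow_pos (n : ℤ) : (0:ℝ) < (2:ℝ) ^ n := zpow_pos (by norm_num) n

lemma gammaMap_coe (n : ℕ) (k : ℤ) (z : ℂ) :
    gammaMap n k z = (((2:ℝ) ^ (-(n:ℤ)) : ℝ) : ℂ) * (z + (k : ℂ)) := by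
  rw [gammaMap, Complex.ofReal_zpow]; norm_num

lemma gammaMap_re (n : ℕ) (k : ℤ) (z : ℂ) :
    (gammaMap n k z).re = (2:ℝ) ^ (-(n:ℤ)) * (z.re + (k:ℝ)) := by
  rw [gammaMap_coe, Complex.re_ofReal_mul]; simp

lemma gammaMap_im (n : ℕ) (k : ℤ) (z : ℂ) :
    (gammaMap n k z).im = (2:ℝ) ^ (-(n:ℤ)) * z.im := by
  rw [gammaMap_coe, Complex.im_ofReal_mul]; simp

lemma gammaMap_continuous (n : ℕ) (k : ℤ) : Continuous (gammaMap n k) := by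
  unfold gammaMap; fun_prop

lemma gammaMap_inj (n : ℕ) (k : ℤ) {a b : ℂ} (h : gammaMap n k a = gammaMap n k b) : a = b := by
  unfold gammaMap at h
  have h2 : (2:ℂ) ^ (-(n:ℤ)) ≠ 0 := zpow_ne_zero _ two_ne_zero
  have := mul_left_cancel₀ h2 h
  exact add_right_cancel this

lemma gammaMap_comp (n m : ℕ) (k j : ℤ) (z : ℂ) :
    gammaMap n k (gammaMap m j z) = gammaMap (n + m) (j + 2 ^ m * k) z := by
  unfold gammaMap
  have h1 : (-(↑(n + m):ℤ)) = (-(n:ℤ)) + (-(m:ℤ)) := by push_cast; ring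
  rw [h1, zpow_add₀ (two_ne_zero)]
  have h2 : ((j + 2 ^ m * k : ℤ) : ℂ) = (j:ℂ) + 2 ^ m * (k:ℂ) := by push_cast; ring
  rw [h2]
  have h3 : ((2:ℂ) ^ (-(m:ℤ))) * (2:ℂ) ^ (m:ℕ) = 1 := by
    rw [← zpow_natCast (2:ℂ) m, ← zpow_add₀ (two_ne_zero : (2:ℂ) ≠ 0)]
    simp
  have expand : (2:ℂ) ^ (-(n:ℤ)) * ((2:ℂ) ^ (-(m:ℤ)) * (z + (j:ℂ)) + (k:ℂ))
      = (2:ℂ) ^ (-(n:ℤ)) * (2:ℂ) ^ (-(m:ℤ)) * (z + ((j:ℂ) + 2 ^ m * (k:ℂ)))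
      + (2:ℂ) ^ (-(n:ℤ)) * ((1 - (2:ℂ) ^ (-(m:ℤ)) * (2:ℂ) ^ (m:ℕ)) * (k:ℂ)) := by ring
  rw [expand, h3]
  ring

lemma mem_Sp_iff {z : ℂ} {n : ℕ} {k : ℤ} :
    z ∈ Sp n k ↔ |(2:ℝ) ^ (n:ℕ) * z.re - (k:ℝ)| ≤ 3/10 ∧ |(2:ℝ) ^ (n:ℕ) * z.im - 1| ≤ 3/10 := by
  constructor
  · rintro ⟨w, ⟨hw1, hw2⟩, rfl⟩
    rw [gammaMap_re, gammaMap_im]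
    have h : (2:ℝ) ^ (n:ℕ) * (2:ℝ) ^ (-(n:ℤ)) = 1 := by
      rw [← zpow_natCast (2:ℝ) n, ← zpow_add₀ (two_ne_zero : (2:ℝ) ≠ 0)]
      simp
    constructor
    · rw [show (2:ℝ) ^ (n:ℕ) * ((2:ℝ) ^ (-(n:ℤ)) * (w.re + k)) - k = w.re by
        rw [← mul_assoc, h]; ring]
      exact hw1
    · rw [show (2:ℝ) ^ (n:ℕ) * ((2:ℝ) ^ (-(n:ℤ)) * w.im) - 1 = w.im - 1 by
        rw [← mul_assoc, h]; ring]
      exact hw2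
  · rintro ⟨h1, h2⟩
    refine ⟨((((2:ℝ) ^ (n:ℕ) : ℝ)) : ℂ) * z - k, ⟨?_, ?_⟩, ?_⟩
    · rw [Complex.sub_re, Complex.re_ofReal_mul, Complex.intCast_re]; exact h1
    · rw [Complex.sub_im, Complex.im_ofReal_mul, Complex.intCast_im, sub_zero]; exact h2
    · rw [gammaMap_coe]
      have h3 : ((2:ℝ) ^ (-(n:ℤ))) * (2:ℝ) ^ (n:ℕ) = 1 := by
        rw [← zpow_natCast (2:ℝ) n, ← zpow_add₀ (two_ne_zero : (2:ℝ) ≠ 0)]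
        simp
      rw [show ((((2:ℝ) ^ (n:ℕ) : ℝ)) : ℂ) * z - k + k = ((((2:ℝ) ^ (n:ℕ) : ℝ)) : ℂ) * z by ring,
        ← mul_assoc]
      rw [← Complex.ofReal_mul, h3]
      simp

lemma mem_D0_iff {z : ℂ} :
    z ∈ D0 ↔ (0 < z.im ∧ z.im < 4/3) ∧ ∀ m : ℕ, ∀ k : ℤ, z ∉ Sp m k := by
  simp only [D0, mem_diff, mem_setOf_eq, mem_iUnion, not_exists]

lemma gamma_mem_D0 {z : ℂ} (hz : z ∈ D0) (n : ℕ) (k : ℤ) : gammaMap n k z ∈ D0 := by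
  rw [mem_D0_iff] at hz ⊢
  obtain ⟨⟨h0, h43⟩, hsq⟩ := hz
  have hp := two_zpow_pos (-(n:ℤ))
  have hle1 : (2:ℝ) ^ (-(n:ℤ)) ≤ 1 := zpow_le_one_of_nonpos₀ one_le_two (by omega)
  refine ⟨⟨?_, ?_⟩, ?_⟩
  · rw [gammaMap_im]; positivity
  · rw [gammaMap_im]
    calc (2:ℝ) ^ (-(n:ℤ)) * z.im ≤ 1 * z.im := by
          exact mul_le_mul_of_nonneg_right hle1 h0.le
      _ < 4/3 := by linarith
  · intro m k' hmem
    rw [mem_Sp_iff, gammaMap_re, gammaMap_im] at hmem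
    obtain ⟨hre, him⟩ := hmem
    have hnm : n ≤ m := by
      by_contra hlt
      push_neg at hlt
      have h2 : (2:ℝ) ^ (m:ℕ) * (2:ℝ) ^ (-(n:ℤ)) ≤ 1/2 := by
        have : (2:ℝ) ^ (m:ℕ) * (2:ℝ) ^ (-(n:ℤ)) = (2:ℝ) ^ ((m:ℤ) - n) := by
          rw [← zpow_natCast (2:ℝ) m, ← zpow_add₀ (two_ne_zero : (2:ℝ) ≠ 0)]
          ring_nf
        rw [this]
        calc (2:ℝ) ^ ((m:ℤ) - n) ≤ (2:ℝ) ^ (-1 : ℤ) :=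
              zpow_le_zpow_right₀ one_le_two (by omega)
          _ = 1/2 := by norm_num
      have hub : (2:ℝ) ^ (m:ℕ) * ((2:ℝ) ^ (-(n:ℤ)) * z.im) ≤ (1/2) * z.im := by
        rw [← mul_assoc]
        exact mul_le_mul_of_nonneg_right h2 h0.le
      have := abs_le.1 him
      linarith
    -- z ∈ Sp (m-n) (k' - 2^(m-n) * k)
    apply hsq (m - n) (k' - 2 ^ (m - n) * k)
    rw [mem_Sp_iff]
    have hpow : (2:ℝ) ^ (m:ℕ) * (2:ℝ) ^ (-(n:ℤ)) = (2:ℝ) ^ ((m - n : ℕ) : ℕ) := by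
      rw [← zpow_natCast (2:ℝ) m, ← zpow_add₀ (two_ne_zero : (2:ℝ) ≠ 0), ← zpow_natCast (2:ℝ) (m - n)]
      congr 1
      omega
    constructor
    · have : (2:ℝ) ^ ((m - n : ℕ) : ℕ) * z.re - ((k' - 2 ^ (m - n) * k : ℤ) : ℝ)
          = (2:ℝ) ^ (m:ℕ) * ((2:ℝ) ^ (-(n:ℤ)) * (z.re + (k:ℝ))) - (k' : ℝ) := by
        push_cast
        rw [← hpow]
        ring
      rw [this]
      exact hre
    · have : (2:ℝ) ^ ((m - n : ℕ) : ℕ) * z.im - 1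
          = (2:ℝ) ^ (m:ℕ) * ((2:ℝ) ^ (-(n:ℤ)) * z.im) - 1 := by
        rw [← hpow]; ring
      rw [this]
      exact him

lemma l1_subset_D0 : l1 ⊆ D0 := by
  intro z hz
  have him : z.im = 2/3 := hz
  rw [mem_D0_iff]
  refine ⟨⟨by rw [him]; norm_num, by rw [him]; norm_num⟩, ?_⟩
  intro m k hmem
  rw [mem_Sp_iff, him] at hmem
  obtain ⟨-, h2⟩ := hmem
  rcases Nat.eq_zero_or_pos m with rfl | hm
  · norm_num [abs_le] at h2
  · have h2m : (2:ℝ) ≤ (2:ℝ) ^ (m:ℕ) := by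
      calc (2:ℝ) = 2 ^ 1 := (pow_one 2).symm
        _ ≤ 2 ^ m := pow_le_pow_right₀ one_le_two hm
    have := abs_le.1 h2
    nlinarith

lemma gamma_mem_closure {z : ℂ} (hz : z ∈ closure D0) (n : ℕ) (k : ℤ) :
    gammaMap n k z ∈ closure D0 := by
  have h1 : gammaMap n k z ∈ closure (gammaMap n k '' D0) :=
    (image_closure_subset_closure_image (gammaMap_continuous n k)) ⟨z, hz, rfl⟩
  exact closure_mono (image_subset_iff.2 fun w hw => gamma_mem_D0 hw n k) h1

lemma closure_D0_im {z : ℂ} (hz : z ∈ closure D0) : 0 ≤ z.im ∧ z.im ≤ 4/3 := by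
  have hsub : D0 ⊆ Complex.im ⁻¹' (Icc 0 (4/3)) := fun w hw => ⟨hw.1.1.le, hw.1.2.le⟩
  have := closure_minimal hsub (isClosed_Icc.preimage Complex.continuous_im) hz
  exact this

lemma isClosed_row (m : ℕ) : IsClosed (⋃ k : ℤ, Sp m k) := by
  have hS : IsClosed (Set.range ((↑) : ℤ → ℝ)) := Int.isClosedEmbedding_coe_real.isClosed_range
  have heq : (⋃ k : ℤ, Sp m k) =
      {z : ℂ | |(2:ℝ) ^ (m:ℕ) * z.im - 1| ≤ 3/10} ∩
      {z : ℂ | Metric.infDist ((2:ℝ) ^ (m:ℕ) * z.re) (Set.range ((↑) : ℤ → ℝ)) ≤ 3/10} := by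
    ext z
    simp only [mem_iUnion, mem_inter_iff, mem_setOf_eq]
    constructor
    · rintro ⟨k, hk⟩
      rw [mem_Sp_iff] at hk
      refine ⟨hk.2, ?_⟩
      calc Metric.infDist ((2:ℝ) ^ (m:ℕ) * z.re) (Set.range ((↑) : ℤ → ℝ))
          ≤ dist ((2:ℝ) ^ (m:ℕ) * z.re) ((k:ℤ):ℝ) :=
            Metric.infDist_le_dist_of_mem ⟨k, rfl⟩
        _ ≤ 3/10 := by rw [Real.dist_eq]; exact hk.1
    · rintro ⟨h1, h2⟩
      obtain ⟨y, ⟨k, rfl⟩, hy⟩ := hS.exists_infDist_eq_dist ⟨(0:ℝ), ⟨0, by norm_num⟩⟩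
        ((2:ℝ) ^ (m:ℕ) * z.re)
      refine ⟨k, ?_⟩
      rw [mem_Sp_iff]
      refine ⟨?_, h1⟩
      rw [← Real.dist_eq, ← hy]
      exact h2
  rw [heq]
  apply IsClosed.inter
  · exact isClosed_le (by fun_prop) continuous_const
  · exact isClosed_le ((Metric.continuous_infDist_pt _).comp (by fun_prop)) continuous_const

lemma isOpen_D0 : IsOpen D0 := by
  rw [Metric.isOpen_iff]
  intro z hz
  rw [mem_D0_iff] at hz
  obtain ⟨⟨h0, h43⟩, hsq⟩ := hz
  obtain ⟨N, hN⟩ : ∃ N : ℕ, (13/10 : ℝ) * (2:ℝ) ^ (-(N:ℤ)) < z.im := by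
    obtain ⟨N, hN⟩ := exists_pow_lt_of_lt_one (x := z.im * (10/13)) (y := (1/2 : ℝ))
      (by positivity) (by norm_num)
    refine ⟨N, ?_⟩
    have : (2:ℝ) ^ (-(N:ℤ)) = (1/2 : ℝ) ^ N := by
      rw [zpow_neg, zpow_natCast, one_div, inv_pow]
    rw [this]
    nlinarith
  set K := ⋃ m ∈ Finset.range N, ⋃ k : ℤ, Sp m k with hK
  have hKclosed : IsClosed K := isClosed_biUnion_finset fun m _ => isClosed_row m
  have hzK : z ∉ K := by
    intro hzK'
    simp only [hK, mem_iUnion, Finset.mem_range] at hzK'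
    obtain ⟨m, hm, k, hk⟩ := hzK'
    exact hsq m k hk
  obtain ⟨ε1, hε1, hball1⟩ := Metric.isOpen_iff.1 hKclosed.isOpen_compl z hzK
  have hpN := two_zpow_pos (-(N:ℤ))
  refine ⟨min ε1 (min (z.im - 13/10 * (2:ℝ) ^ (-(N:ℤ))) (min z.im (4/3 - z.im))),
    lt_min hε1 (lt_min (by linarith) (lt_min h0 (by linarith))), ?_⟩
  intro w hw
  rw [Metric.mem_ball] at hw
  have him : |w.im - z.im| < min ε1 (min (z.im - 13/10 * (2:ℝ) ^ (-(N:ℤ))) (min z.im (4/3 - z.im))) := by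
    calc |w.im - z.im| = |(w - z).im| := by rw [Complex.sub_im]
      _ ≤ ‖w - z‖ := Complex.abs_im_le_norm _
      _ = dist w z := (Complex.dist_eq w z).symm
      _ < _ := hw
  have him1 := abs_lt.1 him
  have hmin1 : min ε1 (min (z.im - 13/10 * (2:ℝ) ^ (-(N:ℤ))) (min z.im (4/3 - z.im))) ≤ z.im :=
    le_trans (min_le_right _ _) (le_trans (min_le_right _ _) (min_le_left _ _))
  have hmin2 : min ε1 (min (z.im - 13/10 * (2:ℝ) ^ (-(N:ℤ))) (min z.im (4/3 - z.im))) ≤ 4/3 - z.im :=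
    le_trans (min_le_right _ _) (le_trans (min_le_right _ _) (min_le_right _ _))
  have hmin3 : min ε1 (min (z.im - 13/10 * (2:ℝ) ^ (-(N:ℤ))) (min z.im (4/3 - z.im)))
      ≤ z.im - 13/10 * (2:ℝ) ^ (-(N:ℤ)) :=
    le_trans (min_le_right _ _) (min_le_left _ _)
  have hmin4 : min ε1 (min (z.im - 13/10 * (2:ℝ) ^ (-(N:ℤ))) (min z.im (4/3 - z.im))) ≤ ε1 :=
    min_le_left _ _
  rw [mem_D0_iff]
  have hwim0 : 13/10 * (2:ℝ) ^ (-(N:ℤ)) < w.im := by linarith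
  refine ⟨⟨by linarith, by linarith⟩, ?_⟩
  intro m k hmem
  rcases lt_or_ge m N with hmN | hmN
  · have hwK : w ∈ Kᶜ := hball1 (Metric.mem_ball.2 (lt_of_lt_of_le hw hmin4))
    apply hwK
    simp only [hK, mem_iUnion, Finset.mem_range]
    exact ⟨m, hmN, k, hmem⟩
  · rw [mem_Sp_iff] at hmem
    have h2 := (abs_le.1 hmem.2).2
    have hpm := two_zpow_pos (-(m:ℤ))
    have hwle : w.im ≤ 13/10 * (2:ℝ) ^ (-(m:ℤ)) := by
      have hid : (2:ℝ) ^ (-(m:ℤ)) * ((2:ℝ) ^ (m:ℕ) * w.im) = w.im := by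
        rw [← mul_assoc, ← zpow_natCast (2:ℝ) m, ← zpow_add₀ (two_ne_zero : (2:ℝ) ≠ 0)]
        simp
      nlinarith
    have hmono : (2:ℝ) ^ (-(m:ℤ)) ≤ (2:ℝ) ^ (-(N:ℤ)) :=
      zpow_le_zpow_right₀ one_le_two (by omega)
    nlinarith

lemma cos43_pos : 0 < Real.cos (4/3) :=
  Real.cos_pos_of_mem_Ioo ⟨by linarith [Real.pi_gt_three], by linarith [Real.pi_gt_three]⟩

lemma phi_lb {w : ℂ} (h1 : 0 ≤ w.im) (h2 : w.im ≤ 4/3) : Real.cos (4/3) ≤ phi w := by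
  rw [phi_eq]
  have hcos : Real.cos (4/3) ≤ Real.cos w.im :=
    Real.cos_le_cos_of_nonneg_of_le_pi h1 (by linarith [Real.pi_gt_three]) h2
  calc Real.cos (4/3) ≤ Real.cos w.im := hcos
    _ = 1 * Real.cos w.im := (one_mul _).symm
    _ ≤ Real.cosh w.re * Real.cos w.im :=
        mul_le_mul_of_nonneg_right (Real.one_le_cosh w.re) (le_trans cos43_pos.le hcos)

/-- Phragmén–Lindelöf type minimum principle on the unbounded domain `D0`. -/
lemma PL {v : ℂ → ℝ} {C : ℝ} (hvc : ContinuousOn v (closure D0))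
    (hC : ∀ z ∈ closure D0, |v z| ≤ C) (hmvp : MVP v D0)
    (hbd : ∀ z ∈ closure D0 \ D0, 0 ≤ v z) : ∀ z ∈ closure D0, 0 ≤ v z := by
  have hc43 := cos43_pos
  have key : ∀ ε > 0, ∀ z ∈ D0, -v z ≤ ε * phi z := by
    intro ε hε z hz
    set R : ℝ := max (|z.re| + 1) (2 * C / (ε * Real.cos (4/3))) with hRdef
    have hC0 : 0 ≤ C := le_trans (abs_nonneg _) (hC z (subset_closure hz))
    have hzR : |z.re| < R := lt_of_lt_of_le (by linarith [abs_nonneg z.re]) (le_max_left _ _)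
    have hR0 : 0 ≤ R := le_trans (by positivity) (le_max_left _ _)
    have hcoshR : C ≤ ε * Real.cosh R * Real.cos (4/3) := by
      have h1 : 2 * C / (ε * Real.cos (4/3)) ≤ R := le_max_right _ _
      have h2 : (R + 1) / 2 ≤ Real.cosh R := by
        have hexp := Real.add_one_le_exp R
        have hexpneg : 0 < Real.exp (-R) := Real.exp_pos _
        rw [Real.cosh_eq]
        linarith
      have h3 : 2 * C ≤ R * (ε * Real.cos (4/3)) := by
        rw [div_le_iff₀ (by positivity)] at h1
        linarith
      have h4 : (ε * Real.cos (4/3)) * ((R+1)/2) ≤ (ε * Real.cos (4/3)) * Real.cosh R :=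
        mul_le_mul_of_nonneg_left h2 (by positivity)
      have h5 : (ε * Real.cos (4/3)) * ((R+1)/2) = R * (ε * Real.cos (4/3)) / 2
          + (ε * Real.cos (4/3)) / 2 := by ring
      have h6 : ε * Real.cosh R * Real.cos (4/3) = (ε * Real.cos (4/3)) * Real.cosh R := by ring
      have h7 : 0 < ε * Real.cos (4/3) := by positivity
      linarith
    set U : Set ℂ := D0 ∩ Complex.re ⁻¹' (Ioo (-R) R) with hUdef
    have hUopen : IsOpen U := isOpen_D0.inter (isOpen_Ioo.preimage Complex.continuous_re)
    have hUb : Bornology.IsBounded U := by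
      apply Bornology.IsBounded.subset (Metric.isBounded_closedBall (x := (0:ℂ)) (r := R + 2))
      intro w hw
      rw [Metric.mem_closedBall, dist_zero_right]
      have h1 : -R < w.re ∧ w.re < R := hw.2
      have h2 : 0 < w.im ∧ w.im < 4/3 := hw.1.1
      calc ‖w‖ ≤ |w.re| + |w.im| := Complex.norm_le_abs_re_add_abs_im w
        _ ≤ R + 2 := by
          rw [_root_.abs_of_nonneg h2.1.le]
          have := abs_lt.2 h1
          linarith
    have hclU : closure U ⊆ closure D0 := closure_mono inter_subset_left
    set W : ℂ → ℝ := fun x => (-1 : ℝ) * v x + (-ε) * phi x with hWdef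
    have hWc : ContinuousOn W (closure U) :=
      (continuousOn_const.mul (hvc.mono hclU)).add (continuousOn_const.mul phi_cont.continuousOn)
    have hWmvp : MVP W U := by
      intro ζ hζ ρ hρ hball
      have hball' : Metric.closedBall ζ ρ ⊆ D0 := hball.trans inter_subset_left
      exact mvp_combine (-1) (-ε) (hmvp ζ hζ.1 ρ hρ hball') (phi_mvp ζ ρ hρ)
        (circle_integrable hvc hρ.le (hball'.trans subset_closure))
        (circle_integrable phi_cont.continuousOn hρ.le (hball'.trans (subset_univ _)))
    have hWbd : ∀ ζ ∈ closure U \ U, W ζ ≤ 0 := by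
      rintro ζ ⟨hζc, hζn⟩
      have hζD : ζ ∈ closure D0 := hclU hζc
      have hζicc : ζ.re ∈ Icc (-R) R := by
        have hsub : closure U ⊆ Complex.re ⁻¹' (Icc (-R) R) :=
          closure_minimal (fun w hw => Ioo_subset_Icc_self hw.2)
            (isClosed_Icc.preimage Complex.continuous_re)
        exact hsub hζc
      obtain ⟨him0, him43⟩ := closure_D0_im hζD
      have hcosim : Real.cos (4/3) ≤ Real.cos ζ.im :=
        Real.cos_le_cos_of_nonneg_of_le_pi him0 (by linarith [Real.pi_gt_three]) him43
      by_cases hζD0 : ζ ∈ D0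
      · have habsR : |ζ.re| = R := by
          have h1 : |ζ.re| ≤ R := abs_le.2 ⟨hζicc.1, hζicc.2⟩
          rcases lt_or_eq_of_le h1 with hlt | heq
          · exact absurd ⟨hζD0, (abs_lt.1 hlt : _)⟩ hζn
          · exact heq
        have hphiζ : Real.cosh R * Real.cos (4/3) ≤ phi ζ := by
          rw [phi_eq, show Real.cosh ζ.re = Real.cosh R from by rw [← habsR, Real.cosh_abs]]
          exact mul_le_mul_of_nonneg_left hcosim (Real.cosh_pos R).le
        have hvζ := hC ζ hζD
        have h5 : ε * (Real.cosh R * Real.cos (4/3)) ≤ ε * phi ζ :=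
          mul_le_mul_of_nonneg_left hphiζ hε.le
        have h6 : -v ζ ≤ C := by
          have := abs_le.1 hvζ
          linarith [this.1]
        simp only [hWdef, neg_one_mul, neg_mul]
        nlinarith
      · have h7 := hbd ζ ⟨hζD, hζD0⟩
        have h8 : Real.cos (4/3) ≤ phi ζ := phi_lb him0 him43
        simp only [hWdef, neg_one_mul, neg_mul]
        nlinarith
    have hzU : z ∈ U := ⟨hz, (abs_lt.1 hzR : _)⟩
    have := maxPrinciple hUopen hUb hWc hWmvp hWbd z (subset_closure hzU)
    simp only [hWdef, neg_one_mul, neg_mul] at this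
    linarith
  intro z hz
  by_cases hzD : z ∈ D0
  · by_contra hneg
    push_neg at hneg
    have hphz : 0 < phi z := lt_of_lt_of_le hc43 (phi_lb (closure_D0_im hz).1 (closure_D0_im hz).2)
    have hεpos : 0 < -v z / (2 * phi z) := div_pos (by linarith) (by positivity)
    have hkey := key _ hεpos z hzD
    have heq : -v z / (2 * phi z) * phi z = -v z / 2 := by
      field_simp
    rw [heq] at hkey
    linarith
  · exact hbd z ⟨hz, hzD⟩

/-- composing with `gammaMap` preserves the mean value property on `D0`. -/
lemma mvp_gamma {u : ℂ → ℝ} (hmvp : MVP u D0) (n : ℕ) (k : ℤ) :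
    MVP (fun z => u (gammaMap n k z)) D0 := by
  have hone : (2:ℝ) ^ (n:ℕ) * (2:ℝ) ^ (-(n:ℤ)) = 1 := by
    rw [← zpow_natCast (2:ℝ) n, ← zpow_add₀ (two_ne_zero : (2:ℝ) ≠ 0)]
    simp
  have honeC : ((((2:ℝ) ^ (n:ℕ)) : ℝ) : ℂ) * ((((2:ℝ) ^ (-(n:ℤ))) : ℝ) : ℂ) = 1 := by
    rw [← Complex.ofReal_mul, hone, Complex.ofReal_one]
  intro z hz ρ hρ hball
  have hp := two_zpow_pos (-(n:ℤ))
  set r' : ℝ := (2:ℝ) ^ (-(n:ℤ)) * ρ with hr'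
  have hr'0 : 0 < r' := by positivity
  have hball' : Metric.closedBall (gammaMap n k z) r' ⊆ D0 := by
    intro w hw
    set w' : ℂ := ((((2:ℝ) ^ (n:ℕ)) : ℝ) : ℂ) * w - k with hw'def
    have hgw' : gammaMap n k w' = w := by
      rw [gammaMap_coe, hw'def]
      linear_combination w * honeC
    have hw'ball : w' ∈ Metric.closedBall z ρ := by
      rw [Metric.mem_closedBall, Complex.dist_eq]
      have hid : w' - z = ((((2:ℝ) ^ (n:ℕ)) : ℝ) : ℂ) * (w - gammaMap n k z) := by
        rw [hw'def, gammaMap_coe]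
        linear_combination (z + (k:ℂ)) * honeC
      rw [hid, norm_mul, Complex.norm_real, Real.norm_eq_abs, _root_.abs_of_nonneg (by positivity : (0:ℝ) ≤ (2:ℝ)^(n:ℕ))]
      have hdist : ‖w - gammaMap n k z‖ ≤ r' := by
        rw [← Complex.dist_eq]
        exact hw
      calc (2:ℝ)^(n:ℕ) * ‖w - gammaMap n k z‖ ≤ (2:ℝ)^(n:ℕ) * r' :=
            mul_le_mul_of_nonneg_left hdist (by positivity)
        _ = ρ := by rw [hr', ← mul_assoc, hone, one_mul]
    rw [← hgw']
    exact gamma_mem_D0 (hball hw'ball) n k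
  have h := hmvp (gammaMap n k z) (gamma_mem_D0 hz n k) r' hr'0 hball'
  have hcongr : ∀ θ : ℝ, gammaMap n k z + (r' : ℂ) * Complex.exp ((θ:ℝ) * Complex.I)
      = gammaMap n k (z + (ρ:ℂ) * Complex.exp ((θ:ℝ) * Complex.I)) := by
    intro θ
    rw [gammaMap_coe, gammaMap_coe, hr']
    push_cast
    ring
  simp only at h ⊢
  rw [h]
  congr 1
  apply intervalIntegral.integral_congr
  intro θ _
  simp only
  rw [hcongr θ]

theorem dirichlet_sol_self_similar (u : ℂ → ℝ) (hu : IsDirichletSol u)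
    (M : ℝ) (hM : IsLeast (u '' l1) M⁻¹) :
    ∀ z ∈ D0, ∀ (n : ℕ) (k : ℤ), u (gammaMap n k z) ≥ M ^ (-(n : ℤ)) * u z := by
  obtain ⟨⟨C, hC⟩, hcont, ⟨-, hmvp'⟩, hl0, hfr0⟩ := hu
  have hmvp : MVP u D0 := hmvp'
  have hfr : frontier D0 = closure D0 \ D0 := isOpen_D0.frontier_eq
  have hbd0 : ∀ z ∈ closure D0 \ D0, 0 ≤ u z := by
    intro z hzf
    by_cases hzl : z ∈ l0
    · rw [hl0 z hzl]; norm_num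
    · rw [hfr0 z ⟨hfr ▸ hzf, hzl⟩]
  have hu0 : ∀ z ∈ closure D0, 0 ≤ u z := PL hcont hC hmvp hbd0
  set c : ℝ := M⁻¹ with hc
  obtain ⟨⟨z1, hz1, hz1u⟩, hlb⟩ := hM
  have hc0 : 0 ≤ c := hz1u ▸ hu0 z1 (subset_closure (l1_subset_D0 hz1))
  have hucont : ∀ (n : ℕ) (k : ℤ), ContinuousOn (fun x => u (gammaMap n k x)) (closure D0) :=
    fun n k => hcont.comp (gammaMap_continuous n k).continuousOn
      (fun w hw => gamma_mem_closure hw n k)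
  have step : ∀ (n : ℕ) (k : ℤ),
      (∀ x ∈ closure D0 \ D0, c ^ n * u x ≤ u (gammaMap n k x)) →
      ∀ z ∈ D0, c ^ n * u z ≤ u (gammaMap n k z) := by
    intro n k hbdry z hz
    set a : ℝ := c ^ n with ha_def
    have ha : 0 ≤ a := pow_nonneg hc0 n
    set v : ℂ → ℝ := fun x => (1:ℝ) * u (gammaMap n k x) + (-a) * u x with hv
    have hvc : ContinuousOn v (closure D0) :=
      (continuousOn_const.mul (hucont n k)).add (continuousOn_const.mul hcont)
    have hvb : ∀ x ∈ closure D0, |v x| ≤ C + a * C := by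
      intro x hx
      have h1 := hC _ (gamma_mem_closure hx n k)
      have h2 := hC x hx
      calc |v x| ≤ |1 * u (gammaMap n k x)| + |(-a) * u x| := abs_add_le _ _
        _ ≤ C + a * C := by
          rw [one_mul, abs_mul, abs_neg, _root_.abs_of_nonneg ha]
          have := mul_le_mul_of_nonneg_left h2 ha
          linarith
    have hvmvp : MVP v D0 := by
      intro ζ hζ ρ hρ hball
      exact mvp_combine (f := fun x => u (gammaMap n k x)) (g := u) 1 (-a)
        (mvp_gamma hmvp n k ζ hζ ρ hρ hball) (hmvp ζ hζ ρ hρ hball)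
        (circle_integrable (hucont n k) hρ.le (hball.trans subset_closure))
        (circle_integrable hcont hρ.le (hball.trans subset_closure))
    have hvbd : ∀ x ∈ closure D0 \ D0, 0 ≤ v x := by
      intro x hx
      have := hbdry x hx
      simp only [hv, one_mul, neg_mul]
      linarith
    have := PL hvc hvb hvmvp hvbd z (subset_closure hz)
    simp only [hv, one_mul, neg_mul] at this
    linarith
  have key : ∀ (n : ℕ) (k : ℤ), ∀ z ∈ D0, c ^ n * u z ≤ u (gammaMap n k z) := by
    intro n
    induction n with
    | zero =>
      intro k z hz
      apply step 0 k ?_ z hz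
      intro x hxf
      rw [pow_zero, one_mul]
      by_cases hxl : x ∈ l0
      · have hxl' : gammaMap 0 k x ∈ l0 := by
          have : (gammaMap 0 k x).im = x.im := by
            rw [gammaMap_im]
            norm_num
          simp only [l0, mem_setOf_eq] at hxl ⊢
          rw [this, hxl]
        rw [hl0 x hxl, hl0 _ hxl']
      · rw [hfr0 x ⟨hfr ▸ hxf, hxl⟩]
        exact hu0 _ (gamma_mem_closure hxf.1 0 k)
    | succ n ih =>
      intro k z hz
      apply step (n+1) k ?_ z hz
      intro x hxf
      by_cases hxl : x ∈ l0
      · rw [hl0 x hxl, mul_one]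
        set w : ℂ := gammaMap 1 (k % 2) x with hwdef
        have hwl1 : w ∈ l1 := by
          simp only [l1, mem_setOf_eq, hwdef]
          rw [gammaMap_im]
          have hxim : x.im = 4/3 := hxl
          rw [hxim]
          norm_num
        have hwD0 : w ∈ D0 := l1_subset_D0 hwl1
        have hcomp : gammaMap n (k / 2) w = gammaMap (n + 1) k x := by
          rw [hwdef, gammaMap_comp, show k % 2 + 2 ^ 1 * (k / 2) = k by omega]
        have h1 := ih (k / 2) w hwD0
        have h2 : c ≤ u w := hlb ⟨w, hwl1, rfl⟩
        calc c ^ (n+1) = c ^ n * c := pow_succ c n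
          _ ≤ c ^ n * u w := mul_le_mul_of_nonneg_left h2 (pow_nonneg hc0 n)
          _ ≤ u (gammaMap n (k/2) w) := h1
          _ = u (gammaMap (n+1) k x) := by rw [hcomp]
      · rw [hfr0 x ⟨hfr ▸ hxf, hxl⟩, mul_zero]
        exact hu0 _ (gamma_mem_closure hxf.1 (n+1) k)
  intro z hz n k
  have hMn : M ^ (-(n:ℤ)) = c ^ n := by
    rcases eq_or_ne M 0 with rfl | hM0
    · rcases Nat.eq_zero_or_pos n with rfl | hn
      · simp
      · rw [zero_zpow _ (by omega), hc]
        simp [zero_pow (by omega : n ≠ 0)]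
    · rw [zpow_neg, zpow_natCast, hc, inv_pow]
  rw [ge_iff_le, hMn]
  exact key n k z hz

end
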